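/- Let (X,d) be a compact metric space with Lipschitz seminorm L on real continuous functions, and let S be any seminorm on the space of Lipschitz functions that is lower semicontinuous with respect to the sup-norm and vanishes on constants. Then there exists C > 0 such that S(f) ≤ C·L(f) for every Lipschitz function f. -/

import Mathlib

open scoped ENNReal
open Filter

/-- The Lipschitz seminorm of `f : X → ℝ`, allowing the value `∞`. -/
noncomputable def Lip {X : Type*} [MetricSpace X] (f : X → ℝ) : ℝ≥0∞ :=
  ⨆ (x : X) (y : X) (_ : x ≠ y), edist (f x) (f y) / edist x y

/-!
The Lipschitz functions `g` with `L(g) ≤ 1` and `g x₀ = 0` form a compact convex set `K` of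
bounded continuous functions (Arzelà–Ascoli). Lower semicontinuity makes the sublevel sets of `S`
closed in `K`, so by Baire's theorem `S` is bounded on a relatively open piece `K ∩ ball g₀ ε`
of `K`. Since `K` is bounded and convex, contracting `K` towards `g₀` moves it into that piece,
and subadditivity and homogeneity of `S` turn this into a bound `S ≤ C` on all of `K`. Scaling
and subtracting constants then give `S f ≤ C L(f)`.
-/

open scoped NNReal BoundedContinuousFunction
open Set Metric

theorem LowerSemicontinuous.exists_isOpen_bddAbove {α : Type*} [TopologicalSpace α]
    [BaireSpace α] [Nonempty α] {f : α → ℝ} (hf : LowerSemicontinuous f) :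
    ∃ U : Set α, IsOpen U ∧ U.Nonempty ∧ BddAbove (f '' U) := by
  obtain ⟨n, hn⟩ := nonempty_interior_of_iUnion_of_closed (fun n : ℕ => hf.isClosed_preimage n)
    (iUnion_eq_univ_iff.2 fun x => exists_nat_ge (f x))
  refine ⟨_, isOpen_interior, hn, (n : ℝ), ?_⟩
  rintro _ ⟨x, hx, rfl⟩
  exact interior_subset (s := f ⁻¹' Iic n) hx

theorem LowerSemicontinuousOn.exists_ball_bddAbove {α : Type*} [PseudoMetricSpace α]
    {K : Set α} {f : α → ℝ} (hf : LowerSemicontinuousOn f K) (hK : IsCompact K)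
    (hne : K.Nonempty) : ∃ x ∈ K, ∃ ε > 0, BddAbove (f '' (K ∩ ball x ε)) := by
  have := isCompact_iff_compactSpace.1 hK
  have := hne.to_subtype
  obtain ⟨U, hUo, ⟨x, hx⟩, hU⟩ :=
    (lowerSemicontinuous_restrict_iff.2 hf).exists_isOpen_bddAbove
  obtain ⟨ε, hε, hball⟩ := Metric.isOpen_iff.1 hUo x hx
  refine ⟨x, x.2, ε, hε, hU.mono ?_⟩
  rintro _ ⟨y, ⟨hyK, hy⟩, rfl⟩
  exact ⟨⟨y, hyK⟩, hball hy, rfl⟩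

section Seminorm

variable {E : Type*} [SeminormedAddCommGroup E] [NormedSpace ℝ E] (p : Seminorm ℝ E) {K : Set E}

theorem Seminorm.bddAbove_image_of_convex_of_bddAbove_ball (hKc : Convex ℝ K)
    (hKb : Bornology.IsBounded K) {x₀ : E} (hx₀ : x₀ ∈ K) {ε : ℝ} (hε : 0 < ε)
    (hp : BddAbove (p '' (K ∩ Metric.ball x₀ ε))) : BddAbove (p '' K) := by
  obtain ⟨c, hc⟩ := hp
  obtain ⟨R, hR⟩ := hKb.subset_closedBall x₀
  set r := max R 0 + 1
  have hr : 0 < r := by positivity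
  -- `t` is small enough that `x₀ + t • (h - x₀) ∈ ball x₀ ε` for every `h ∈ K`.
  set t := min 1 (ε / r)
  have ht : 0 < t := lt_min one_pos (by positivity)
  have hpx₀ : p x₀ ≤ c := hc ⟨x₀, ⟨hx₀, Metric.mem_ball_self hε⟩, rfl⟩
  refine ⟨c + 2 * c / t, ?_⟩
  rintro _ ⟨h, hh, rfl⟩
  have hg : x₀ + t • (h - x₀) ∈ K := hKc.add_smul_sub_mem hx₀ hh ⟨ht.le, min_le_left _ _⟩
  have hdist : dist (x₀ + t • (h - x₀)) x₀ < ε := by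
    have hhr : dist h x₀ < r := (hR hh).trans_lt (by linarith [le_max_left R 0])
    rw [dist_eq_norm, add_sub_cancel_left, norm_smul, Real.norm_of_nonneg ht.le, ← dist_eq_norm]
    calc t * dist h x₀ ≤ ε / r * dist h x₀ := by gcongr; exact min_le_right _ _
      _ < ε / r * r := by gcongr
      _ = ε := div_mul_cancel₀ ε hr.ne'
  have hpg : p (x₀ + t • (h - x₀)) ≤ c := hc ⟨_, ⟨hg, hdist⟩, rfl⟩
  have hscaled : t * p (h - x₀) ≤ 2 * c := by
    calc t * p (h - x₀) = p ((x₀ + t • (h - x₀)) - x₀) := by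
          rw [add_sub_cancel_left, map_smul_eq_mul, Real.norm_of_nonneg ht.le]
      _ ≤ p (x₀ + t • (h - x₀)) + p x₀ := map_sub_le_add p _ _
      _ ≤ 2 * c := by linarith
  calc p h = p (x₀ + (h - x₀)) := by rw [add_sub_cancel]
    _ ≤ p x₀ + p (h - x₀) := map_add_le_add p _ _
    _ ≤ c + 2 * c / t := by gcongr; rwa [le_div_iff₀ ht, mul_comm]

theorem Seminorm.bddAbove_image_of_isCompact_of_convex (hK : IsCompact K) (hKc : Convex ℝ K)
    (hp : LowerSemicontinuousOn p K) : BddAbove (p '' K) := by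
  rcases K.eq_empty_or_nonempty with rfl | hne
  · simp
  obtain ⟨x₀, hx₀, ε, hε, hball⟩ := hp.exists_ball_bddAbove hK hne
  exact p.bddAbove_image_of_convex_of_bddAbove_ball hKc hK.isBounded hx₀ hε hball

end Seminorm

theorem lowerSemicontinuous_comp_coe_of_tendstoUniformly {X : Type*} [TopologicalSpace X]
    {S : (X → ℝ) → ℝ} (hS : ∀ (f : ℕ → X → ℝ) (g : X → ℝ) (c : ℝ),
      TendstoUniformly f g atTop → (∀ n, S (f n) ≤ c) → S g ≤ c) :
    LowerSemicontinuous fun g : X →ᵇ ℝ => S g := by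
  refine lowerSemicontinuous_iff_isClosed_preimage.2 fun c => IsSeqClosed.isClosed ?_
  intro u g hu hug
  exact hS _ _ c (BoundedContinuousFunction.tendsto_iff_tendstoUniformly.1 hug) hu

theorem lipschitzWith_toNNReal_lip {X : Type*} [MetricSpace X] {f : X → ℝ} (hf : Lip f ≠ ⊤) :
    LipschitzWith (Lip f).toNNReal f := by
  intro x y
  rw [ENNReal.coe_toNNReal hf]
  rcases eq_or_ne x y with rfl | hxy
  · simp
  · rw [← ENNReal.div_le_iff (edist_pos.2 hxy).ne' (edist_ne_top x y)]
    exact le_iSup₂_of_le x y (le_iSup_of_le hxy le_rfl)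

section Lipschitz

variable {X : Type*} [MetricSpace X]

def pointedLipschitzBall (x₀ : X) : Set (X →ᵇ ℝ) := {f | LipschitzWith 1 f ∧ f x₀ = 0}

theorem convex_pointedLipschitzBall (x₀ : X) : Convex ℝ (pointedLipschitzBall x₀) := by
  rintro f ⟨hf, hf₀⟩ g ⟨hg, hg₀⟩ a b ha hb hab
  refine ⟨?_, by simp [hf₀, hg₀]⟩
  have hnorm : ‖a‖₊ * 1 + ‖b‖₊ * 1 = (1 : ℝ≥0) := by
    ext
    simp [abs_of_nonneg ha, abs_of_nonneg hb, hab]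
  have := ((lipschitzWith_smul a).comp hf).add ((lipschitzWith_smul b).comp hg)
  rw [hnorm] at this
  exact this

theorem isCompact_pointedLipschitzBall [CompactSpace X] (x₀ : X) :
    IsCompact (pointedLipschitzBall x₀) := by
  have hclosed : IsClosed (pointedLipschitzBall x₀) :=
    ((isClosed_setOfPred_lipschitzWith (α := X) (β := ℝ) 1).preimage
      BoundedContinuousFunction.continuous_coe).inter
      (isClosed_eq (continuous_eval_const x₀) continuous_const)
  refine BoundedContinuousFunction.arzela_ascoli₂ (closedBall 0 (diam (univ : Set X)))
    (isCompact_closedBall 0 _) _ hclosed (fun f x hf => ?_)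
    (LipschitzWith.uniformEquicontinuous _ 1 fun f => f.2.1).equicontinuous
  rw [mem_closedBall, ← hf.2]
  exact (hf.1.dist_le_mul x x₀).trans
    (by simpa using dist_le_diam_of_mem isCompact_univ.isBounded (mem_univ x) (mem_univ x₀))

variable (p : Seminorm ℝ (X → ℝ))

theorem Seminorm.exists_bound_of_lipschitzWith_one [CompactSpace X]
    (hp : LowerSemicontinuous fun g : X →ᵇ ℝ => p g) (x₀ : X) :
    ∃ C, ∀ g : X → ℝ, LipschitzWith 1 g → g x₀ = 0 → p g ≤ C := by
  let q : Seminorm ℝ (X →ᵇ ℝ) := p.comp <| (ContinuousMap.coeFnLinearMap ℝ).comp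
    (BoundedContinuousFunction.toContinuousMapLinearMap X ℝ ℝ)
  obtain ⟨C, hC⟩ := q.bddAbove_image_of_isCompact_of_convex (isCompact_pointedLipschitzBall x₀)
    (convex_pointedLipschitzBall x₀) (hp.lowerSemicontinuousOn _)
  exact ⟨C, fun g hg hg₀ =>
    hC ⟨BoundedContinuousFunction.mkOfCompact ⟨g, hg.continuous⟩, ⟨hg, hg₀⟩, rfl⟩⟩

theorem Seminorm.le_mul_of_lipschitzWith (hconst : ∀ c : ℝ, p (fun _ => c) = 0) {x₀ : X} {C : ℝ}
    (hC : ∀ g : X → ℝ, LipschitzWith 1 g → g x₀ = 0 → p g ≤ C) {K : ℝ≥0} {f : X → ℝ}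
    (hf : LipschitzWith K f) : p f ≤ C * K := by
  rcases eq_or_ne K 0 with rfl | hK
  · have : f = fun _ => f x₀ := funext fun x => dist_le_zero.1 (by simpa using hf.dist_le_mul x x₀)
    rw [this, hconst]
    simp
  set g : X → ℝ := (K : ℝ)⁻¹ • (f - fun _ => f x₀)
  have hg : LipschitzWith 1 g := by
    have := (lipschitzWith_smul (K : ℝ)⁻¹).comp (hf.sub (LipschitzWith.const (f x₀)))
    have hnorm : ‖(K : ℝ)⁻¹‖₊ * (K + 0) = 1 := by
      ext
      simp [hK]
    rw [hnorm] at this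
    exact this
  have hfg : f = (K : ℝ) • g + fun _ => f x₀ := by
    ext x
    simp [g, hK]
  calc p f = p ((K : ℝ) • g + fun _ => f x₀) := congrArg p hfg
    _ ≤ p ((K : ℝ) • g) + p (fun _ => f x₀) := map_add_le_add p _ _
    _ = K * p g := by rw [hconst, add_zero, map_smul_eq_mul, Real.norm_of_nonneg K.coe_nonneg]
    _ ≤ C * K := by rw [mul_comm]; gcongr; exact hC g hg (by simp [g])

end Lipschitz

theorem seminorm_dominated_by_lip_general {X : Type*} [MetricSpace X] [CompactSpace X]
    (S : (X → ℝ) → ℝ)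
    (hadd : ∀ f g : X → ℝ, S (f + g) ≤ S f + S g)
    (hsmul : ∀ (c : ℝ) (f : X → ℝ), S (c • f) = |c| * S f)
    (hconst : ∀ c : ℝ, S (fun _ => c) = 0)
    (hlsc : ∀ (f : ℕ → X → ℝ) (g : X → ℝ) (c : ℝ),
      TendstoUniformly f g atTop → (∀ n, S (f n) ≤ c) → S g ≤ c) :
    ∃ C : ℝ, 0 < C ∧ ∀ f : X → ℝ, Lip f ≠ ⊤ →
      ENNReal.ofReal (S f) ≤ ENNReal.ofReal C * Lip f := by
  rcases isEmpty_or_nonempty X with hX | ⟨⟨x₀⟩⟩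
  · refine ⟨1, one_pos, fun f _ => ?_⟩
    rw [Subsingleton.elim f fun _ => 0, hconst, ENNReal.ofReal_zero]
    exact zero_le
  let p : Seminorm ℝ (X → ℝ) := Seminorm.of S hadd fun c f => by rw [hsmul, Real.norm_eq_abs]
  obtain ⟨C, hC⟩ :=
    p.exists_bound_of_lipschitzWith_one (lowerSemicontinuous_comp_coe_of_tendstoUniformly hlsc) x₀
  refine ⟨max C 1, by positivity, fun f hf => ?_⟩
  have hSf : S f ≤ max C 1 * (Lip f).toReal :=
    p.le_mul_of_lipschitzWith hconst (fun g hg hg₀ => (hC g hg hg₀).trans (le_max_left _ _))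
      (lipschitzWith_toNNReal_lip hf)
  calc ENNReal.ofReal (S f) ≤ ENNReal.ofReal (max C 1 * (Lip f).toReal) :=
        ENNReal.ofReal_le_ofReal hSf
    _ = ENNReal.ofReal (max C 1) * Lip f := by
        rw [ENNReal.ofReal_mul (by positivity), ENNReal.ofReal_toReal hf]

/-- On a compact metric space, any seminorm `S` on functions which is lower
semicontinuous for uniform convergence and vanishes on constants is dominated
by a constant multiple of the Lipschitz seminorm: there is `C > 0` with
`S(f) ≤ C·L(f)` for every Lipschitz `f`. -/
theorem seminorm_dominated_by_lip {X : Type*} [MetricSpace X] [CompactSpace X]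
    (S : (X → ℝ) → ℝ)
    (hnn : ∀ f : X → ℝ, 0 ≤ S f)
    (hadd : ∀ f g : X → ℝ, S (f + g) ≤ S f + S g)
    (hsmul : ∀ (c : ℝ) (f : X → ℝ), S (c • f) = |c| * S f)
    (hconst : ∀ c : ℝ, S (fun _ => c) = 0)
    (hlsc : ∀ (f : ℕ → X → ℝ) (g : X → ℝ) (c : ℝ),
      TendstoUniformly f g atTop → (∀ n, S (f n) ≤ c) → S g ≤ c) :
    ∃ C : ℝ, 0 < C ∧ ∀ f : X → ℝ, Lip f ≠ ⊤ →
      ENNReal.ofReal (S f) ≤ ENNReal.ofReal C * Lip f :=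
  seminorm_dominated_by_lip_general S hadd hsmul hconst hlsc
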